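/- Truncated NLL error bound: Let q̂_h be a KDE built from K i.i.d. samples of a model density q at each of CL evaluation points {y_{c,t}}, using a kernel bounded by κ with m₂ second moment, and suppose q is C² with |q''| ≤ M uniformly. Define the empirical truncated NLL L̂ = -(1/(CL)) Σ_{c,t} log max{q̂_h(y_{c,t}), ε} and the population truncated NLL L_ε = -(1/(CL)) Σ_{c,t} log max{q(y_{c,t}), ε}. Then for any δ ∈ (0,1), with probability at least 1-δ, |L̂ - L_ε| ≤ (κ/(ε h)) √(2 log(2CL/δ)/K) + (m₂ M / (2ε)) h². -/

import Mathlib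

/-!
At each evaluation point `x` the KDE error splits as `q̂_h(x) - q(x) = (q̂_h(x) - E q̂_h(x)) +
(E q̂_h(x) - q(x))`. The smoothing bias `E q̂_h(x) - q(x) = ∫ K(u) (q(x - h u) - q(x)) du` is at
most `m₂ M h² / 2`, since the first-order Taylor term integrates to zero against the centred
kernel. The fluctuation is an average of `K` independent variables with values in `[0, κ / h]`, so
Hoeffding's inequality, with a union bound over the `N` points, makes all of them at most
`(κ / h) √(2 log(2N/δ) / K)` with probability `≥ 1 - δ`. Finally `a ↦ log (max a ε)` is
`(1/ε)`-Lipschitz, so averaging over the points costs nothing.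
-/

open MeasureTheory ProbabilityTheory Real Set Finset

noncomputable def kde {K : ℕ} (Kker : ℝ → ℝ) (h : ℝ) (Y : Fin K → ℝ) (x : ℝ) : ℝ :=
  (1 / (K * h)) * ∑ k, Kker ((x - Y k) / h)

noncomputable def truncatedNLL {N : ℕ} (ε : ℝ) (f : ℝ → ℝ) (y : Fin N → ℝ) : ℝ :=
  -(1 / (N : ℝ)) * ∑ i, log (max (f (y i)) ε)

theorem measureReal_le_abs_sum_sub_integral_le {Ω ι : Type*} [MeasurableSpace Ω]
    {μ : Measure Ω} {X : ι → Ω → ℝ} (h_indep : iIndepFun X μ) (hX : ∀ i, AEMeasurable (X i) μ)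
    {a b : ℝ} (hab : ∀ i, ∀ᵐ ω ∂μ, X i ω ∈ Icc a b) (s : Finset ι) {r : ℝ} (hr : 0 ≤ r) :
    μ.real {ω | r ≤ |∑ i ∈ s, (X i ω - μ[X i])|}
      ≤ 2 * exp (-2 * r ^ 2 / (#s * (b - a) ^ 2)) := by
  have := h_indep.isProbabilityMeasure
  have h_subG : ∀ i ∈ s, HasSubgaussianMGF (fun ω ↦ X i ω - μ[X i]) ((‖b - a‖₊ / 2) ^ 2) μ :=
    fun i _ ↦ hasSubgaussianMGF_of_mem_Icc (hX i) (hab i)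
  have h_indep_centred : iIndepFun (fun i ω ↦ X i ω - μ[X i]) μ :=
    (h_indep.comp (fun i (x : ℝ) ↦ x - μ[X i]) fun _ ↦ measurable_id.sub_const _ :)
  have h_indep_neg : iIndepFun (fun i ω ↦ -(X i ω - μ[X i])) μ :=
    h_indep_centred.comp (fun _ x ↦ -x) fun _ ↦ measurable_neg
  have h_param : 2 * ((∑ i ∈ s, (‖b - a‖₊ / 2) ^ 2 : NNReal) : ℝ) = #s * (b - a) ^ 2 / 2 := by
    push_cast
    rw [Finset.sum_const, nsmul_eq_mul, Real.norm_eq_abs, div_pow, sq_abs]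
    ring
  have h_upper := HasSubgaussianMGF.measure_sum_ge_le_of_iIndepFun h_indep_centred h_subG hr
  have h_lower := HasSubgaussianMGF.measure_sum_ge_le_of_iIndepFun h_indep_neg
    (fun i hi ↦ (h_subG i hi).neg) hr
  rw [h_param] at h_upper h_lower
  calc μ.real {ω | r ≤ |∑ i ∈ s, (X i ω - μ[X i])|}
      ≤ μ.real ({ω | r ≤ ∑ i ∈ s, (X i ω - μ[X i])} ∪
          {ω | r ≤ ∑ i ∈ s, -(X i ω - μ[X i])}) := by
        refine measureReal_mono fun ω (hω : r ≤ |_|) ↦ ?_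
        rcases le_abs.mp hω with h | h
        · exact Or.inl h
        · exact Or.inr <| show r ≤ ∑ i ∈ s, -(X i ω - μ[X i]) by rwa [Finset.sum_neg_distrib]
    _ ≤ _ := (measureReal_union_le _ _).trans (add_le_add h_upper h_lower)
    _ = 2 * exp (-2 * r ^ 2 / (#s * (b - a) ^ 2)) := by
        rw [← two_mul]; congr 2; field_simp

theorem measureReal_le_abs_sum_sub_le_two_mul_exp_neg {Ω : Type*} [MeasurableSpace Ω]
    {μ : Measure Ω} {K : ℕ} (hK : 0 < K) {X : Fin K → Ω → ℝ} (h_indep : iIndepFun X μ)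
    (hX : ∀ k, AEMeasurable (X k) μ) {κ : ℝ} (hκ : 0 < κ) (hX_mem : ∀ k ω, X k ω ∈ Icc 0 κ)
    {m : ℝ} (hm : ∀ k, μ[X k] = m) {L : ℝ} (hL : 0 ≤ L) :
    μ.real {ω | κ * √(2 * L / K) * K ≤ |∑ k, (X k ω - m)|} ≤ 2 * exp (-L) := by
  have hK' : (0 : ℝ) < K := Nat.cast_pos.mpr hK
  have hoeff := measureReal_le_abs_sum_sub_integral_le h_indep hX
    (fun k ↦ ae_of_all _ (hX_mem k)) univ (r := κ * √(2 * L / K) * K) (by positivity)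
  simp only [hm, Finset.card_univ, Fintype.card_fin, sub_zero] at hoeff
  refine hoeff.trans ?_
  calc 2 * exp (-2 * (κ * √(2 * L / K) * K) ^ 2 / (K * κ ^ 2)) = 2 * exp (-(4 * L)) := by
        rw [mul_pow, mul_pow, sq_sqrt (by positivity)]
        field_simp
        ring_nf
    _ ≤ 2 * exp (-L) := by gcongr; linarith

theorem one_sub_card_mul_le_measureReal_compl_iUnion {α ι : Type*} [MeasurableSpace α]
    {μ : Measure α} [IsProbabilityMeasure μ] [Fintype ι] {s : ι → Set α} {r : ℝ}
    (hs : ∀ i, μ.real (s i) ≤ r) :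
    1 - Fintype.card ι * r ≤ μ.real (⋃ i, s i)ᶜ := by
  have h_union : μ.real (⋃ i, s i) ≤ Fintype.card ι * r :=
    calc μ.real (⋃ i, s i) ≤ ∑ i, μ.real (s i) := measureReal_iUnion_fintype_le _
      _ ≤ ∑ _i : ι, r := Finset.sum_le_sum fun i _ ↦ hs i
      _ = Fintype.card ι * r := by rw [Finset.sum_const, Finset.card_univ, nsmul_eq_mul]
  have h_cover := measureReal_union_le (μ := μ) (⋃ i, s i) (⋃ i, s i)ᶜ
  rw [union_compl_self, probReal_univ] at h_cover
  linarith

theorem pos_of_forall_mem_Icc_of_integral_eq_one {α : Type*} [MeasurableSpace α]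
    {μ : Measure α} {f : α → ℝ} {κ : ℝ} (hf : ∀ x, f x ∈ Icc 0 κ) (h1 : ∫ x, f x ∂μ = 1) :
    0 < κ := by
  by_contra! hκ
  have : f = 0 := funext fun x ↦ le_antisymm ((hf x).2.trans hκ) (hf x).1
  simp [this] at h1

theorem integral_comp_eq_integral_mul_of_map_eq_withDensity {Ω : Type*} [MeasurableSpace Ω]
    {P : Measure Ω} {Y : Ω → ℝ} (hY : Measurable Y) {q : ℝ → ℝ} (hq : Measurable q)
    (hq_nonneg : ∀ t, 0 ≤ q t) (hlaw : P.map Y = volume.withDensity fun t ↦ ENNReal.ofReal (q t))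
    {g : ℝ → ℝ} (hg : Measurable g) :
    ∫ ω, g (Y ω) ∂P = ∫ t, g t * q t := by
  rw [← integral_map hY.aemeasurable hg.aestronglyMeasurable, hlaw,
    integral_withDensity_eq_integral_toReal_smul hq.ennreal_ofReal
      (ae_of_all _ fun _ ↦ ENNReal.ofReal_lt_top)]
  congr 1 with t
  rw [ENNReal.toReal_ofReal (hq_nonneg t), smul_eq_mul, mul_comm]

theorem log_sub_log_le_abs_sub_div {ε u v : ℝ} (hε : 0 < ε) (hu : 0 < u) (hv : ε ≤ v) :
    log u - log v ≤ |u - v| / ε := by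
  have hv0 : 0 < v := hε.trans_le hv
  calc log u - log v = log (u / v) := (log_div hu.ne' hv0.ne').symm
    _ ≤ u / v - 1 := log_le_sub_one_of_pos (div_pos hu hv0)
    _ = (u - v) / v := by field_simp
    _ ≤ |u - v| / v := by gcongr; exact le_abs_self _
    _ ≤ |u - v| / ε := by gcongr

theorem abs_log_max_sub_log_max_le {ε : ℝ} (hε : 0 < ε) (a b : ℝ) :
    |log (max a ε) - log (max b ε)| ≤ |a - b| / ε := by
  have hmax : |max a ε - max b ε| ≤ |a - b| := abs_max_sub_max_le_abs a b ε
  have ha := hε.trans_le (le_max_right a ε)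
  have hb := hε.trans_le (le_max_right b ε)
  rw [abs_sub_le_iff]
  constructor
  · exact (log_sub_log_le_abs_sub_div hε ha (le_max_right b ε)).trans (by gcongr)
  · exact (log_sub_log_le_abs_sub_div hε hb (le_max_right a ε)).trans
      (by rw [abs_sub_comm]; gcongr)

theorem abs_sub_sub_deriv_mul_le {f : ℝ → ℝ} (hf : ContDiff ℝ 2 f) {M : ℝ}
    (hM : ∀ t, |deriv (deriv f) t| ≤ M) (x₀ x : ℝ) :
    |f x - f x₀ - deriv f x₀ * (x - x₀)| ≤ M / 2 * (x - x₀) ^ 2 := by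
  rcases eq_or_ne x₀ x with rfl | hx
  · simp
  obtain ⟨x', -, hx'⟩ := taylor_mean_remainder_lagrange_iteratedDeriv (n := 1) hx hf.contDiffOn
  have htaylor : taylorWithinEval f 1 (uIcc x₀ x) x₀ x = f x₀ + deriv f x₀ * (x - x₀) := by
    rw [taylorWithinEval_succ, taylor_within_zero_eval]
    have hderiv := (hf.differentiable (by norm_num) x₀).derivWithin
      (uniqueDiffOn_uIcc hx x₀ left_mem_uIcc)
    simp [hderiv, mul_comm]
  rw [sub_sub, ← htaylor, hx', iteratedDeriv_succ, iteratedDeriv_one]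
  norm_num [abs_mul, abs_div]
  calc |deriv (deriv f) x'| * (x - x₀) ^ 2 / 2 ≤ M * (x - x₀) ^ 2 / 2 := by gcongr; exact hM x'
    _ = M / 2 * (x - x₀) ^ 2 := by ring

theorem abs_integral_mul_comp_sub_mul_sub_le {f Kker : ℝ → ℝ} (hf : ContDiff ℝ 2 f) {M m2 : ℝ}
    (hM : ∀ t, |deriv (deriv f) t| ≤ M) (hK_nonneg : ∀ u, 0 ≤ Kker u)
    (hK1_int : Integrable fun u ↦ u * Kker u) (hK2_int : Integrable fun u ↦ u ^ 2 * Kker u)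
    (hK_mass : ∫ u, Kker u = 1) (hK_mean : ∫ u, u * Kker u = 0)
    (hK_m2 : ∫ u, u ^ 2 * Kker u = m2)
    (y h : ℝ) :
    |(∫ u, Kker u * f (y - h * u)) - f y| ≤ m2 * M / 2 * h ^ 2 := by
  have hK_int : Integrable Kker := Integrable.of_integral_ne_zero (by simp [hK_mass])
  set R : ℝ → ℝ := fun u ↦ f (y - h * u) - f y - deriv f y * (y - h * u - y)
  have hR : ∀ u, |Kker u * R u| ≤ M / 2 * h ^ 2 * (u ^ 2 * Kker u) := fun u ↦ by
    rw [abs_mul, abs_of_nonneg (hK_nonneg u)]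
    calc Kker u * |R u| ≤ Kker u * (M / 2 * (y - h * u - y) ^ 2) :=
          mul_le_mul_of_nonneg_left (abs_sub_sub_deriv_mul_le hf hM _ _) (hK_nonneg u)
      _ = M / 2 * h ^ 2 * (u ^ 2 * Kker u) := by ring
  have hR_int : Integrable fun u ↦ Kker u * R u := by
    refine (hK2_int.const_mul _).mono' ?_ (.of_forall hR)
    exact hK_int.aestronglyMeasurable.mul (by fun_prop : Continuous R).aestronglyMeasurable
  have h_split : ∫ u, Kker u * f (y - h * u) = f y + ∫ u, Kker u * R u := by
    have h_expand : (fun u ↦ Kker u * f (y - h * u))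
        = fun u ↦ f y * Kker u - h * deriv f y * (u * Kker u) + Kker u * R u := by
      ext u; simp only [R]; ring
    have h_poly_int : Integrable fun u ↦ f y * Kker u - h * deriv f y * (u * Kker u) :=
      (hK_int.const_mul _).sub (hK1_int.const_mul _)
    rw [h_expand, integral_add h_poly_int hR_int,
      integral_sub (hK_int.const_mul _) (hK1_int.const_mul _), integral_const_mul,
      integral_const_mul, hK_mass, hK_mean]
    ring
  rw [h_split, add_sub_cancel_left]
  calc |∫ u, Kker u * R u| ≤ ∫ u, |Kker u * R u| := abs_integral_le_integral_abs
    _ ≤ ∫ u, M / 2 * h ^ 2 * (u ^ 2 * Kker u) :=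
        integral_mono hR_int.abs (hK2_int.const_mul _) hR
    _ = m2 * M / 2 * h ^ 2 := by rw [integral_const_mul, hK_m2]; ring

theorem integral_comp_sub_div_mul_div_eq {Kker f : ℝ → ℝ} (y : ℝ) {h : ℝ} (hh : 0 < h) :
    (∫ t, Kker ((y - t) / h) * f t) / h = ∫ u, Kker u * f (y - h * u) := by
  have h_comp : (fun t ↦ Kker ((y - t) / h) * f t)
      = fun t ↦ (fun s ↦ Kker (s / h) * f (y - h * (s / h))) (y - t) := by
    ext t; dsimp only; rw [mul_div_cancel₀ _ hh.ne', sub_sub_cancel]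
  rw [h_comp, integral_sub_left_eq_self (fun s ↦ Kker (s / h) * f (y - h * (s / h))) volume y,
    Measure.integral_comp_div (fun u ↦ Kker u * f (y - h * u)), abs_of_pos hh, smul_eq_mul,
    mul_div_cancel_left₀ _ hh.ne']

theorem abs_kde_sub_le_of_abs_sum_sub_le {K : ℕ} (hK : 0 < K) {Kker : ℝ → ℝ} {h : ℝ}
    (hh : 0 < h) (Y : Fin K → ℝ) {x m r : ℝ} (hdev : |∑ k, (Kker ((x - Y k) / h) - m)| ≤ r) :
    |kde Kker h Y x - m / h| ≤ r / (K * h) := by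
  have hK' : (0 : ℝ) < K := Nat.cast_pos.mpr hK
  have h_eq : kde Kker h Y x - m / h = (∑ k, (Kker ((x - Y k) / h) - m)) / (K * h) := by
    rw [kde, Finset.sum_sub_distrib, Finset.sum_const, Finset.card_univ, Fintype.card_fin,
      nsmul_eq_mul]
    field_simp
  rw [h_eq, abs_div, abs_of_pos (by positivity : (0 : ℝ) < K * h)]
  exact div_le_div_of_nonneg_right hdev (by positivity)

theorem abs_truncatedNLL_sub_le {N : ℕ} (hN : 0 < N) {ε : ℝ} (hε : 0 < ε) {f g : ℝ → ℝ}
    {y : Fin N → ℝ} {η : ℝ} (hfg : ∀ i, |f (y i) - g (y i)| ≤ η) :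
    |truncatedNLL ε f y - truncatedNLL ε g y| ≤ η / ε := by
  have hN' : (0 : ℝ) < N := Nat.cast_pos.mpr hN
  have h_eq : truncatedNLL ε f y - truncatedNLL ε g y
      = (1 / N) * ∑ i, (log (max (g (y i)) ε) - log (max (f (y i)) ε)) := by
    rw [truncatedNLL, truncatedNLL, Finset.sum_sub_distrib]
    ring
  rw [h_eq, abs_mul, abs_of_pos (by positivity)]
  calc 1 / (N : ℝ) * |∑ i, (log (max (g (y i)) ε) - log (max (f (y i)) ε))|
      ≤ 1 / N * ∑ _i : Fin N, η / ε := by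
        gcongr
        refine (Finset.abs_sum_le_sum_abs _ _).trans (Finset.sum_le_sum fun i _ ↦ ?_)
        refine (abs_log_max_sub_log_max_le hε _ _).trans ?_
        rw [abs_sub_comm]
        gcongr
        exact hfg i
    _ = η / ε := by
        rw [Finset.sum_const, Finset.card_univ, Fintype.card_fin, nsmul_eq_mul]
        field_simp

theorem abs_kde_sub_le {K : ℕ} (hK : 0 < K) {Kker q : ℝ → ℝ} {h M m2 : ℝ} (hh : 0 < h)
    (hq : ContDiff ℝ 2 q) (hM : ∀ t, |deriv (deriv q) t| ≤ M) (hK_nonneg : ∀ u, 0 ≤ Kker u)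
    (hK1_int : Integrable fun u ↦ u * Kker u) (hK2_int : Integrable fun u ↦ u ^ 2 * Kker u)
    (hK_mass : ∫ u, Kker u = 1) (hK_mean : ∫ u, u * Kker u = 0)
    (hK_m2 : ∫ u, u ^ 2 * Kker u = m2)
    (Y : Fin K → ℝ) {x r : ℝ}
    (hdev : |∑ k, (Kker ((x - Y k) / h) - ∫ s, Kker ((x - s) / h) * q s)| ≤ r) :
    |kde Kker h Y x - q x| ≤ r / (K * h) + m2 * M / 2 * h ^ 2 := by
  set m := ∫ s, Kker ((x - s) / h) * q s
  have h_bias : |m / h - q x| ≤ m2 * M / 2 * h ^ 2 := by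
    rw [integral_comp_sub_div_mul_div_eq _ hh]
    exact abs_integral_mul_comp_sub_mul_sub_le hq hM hK_nonneg hK1_int hK2_int hK_mass hK_mean
      hK_m2 _ _
  calc |kde Kker h Y x - q x| ≤ |kde Kker h Y x - m / h| + |m / h - q x| := abs_sub_le _ _ _
    _ ≤ r / (K * h) + m2 * M / 2 * h ^ 2 :=
        add_le_add (abs_kde_sub_le_of_abs_sum_sub_le hK hh Y hdev) h_bias

theorem truncated_nll_error_bound_general
    {Ω : Type*} [MeasurableSpace Ω] (P : Measure Ω) [IsProbabilityMeasure P]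
    (K : ℕ) (hK : 1 ≤ K) (Ysamp : Fin K → Ω → ℝ) (hYmeas : ∀ k, Measurable (Ysamp k))
    (q Kker : ℝ → ℝ) (κ M m2 ε : ℝ) (hε : 0 < ε)
    (hq : ContDiff ℝ 2 q) (hqnn : ∀ t, 0 ≤ q t)
    (hM : ∀ t, |deriv (deriv q) t| ≤ M)
    (hKkerMeas : Measurable Kker) (hKkerBdd : ∀ u, Kker u ∈ Set.Icc 0 κ)
    (hK1int : Integrable (fun u => u * Kker u))
    (hK2int : Integrable (fun u => u ^ 2 * Kker u))
    (hK1 : ∫ u, Kker u = 1)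
    (hK0 : ∫ u, u * Kker u = 0)
    (hK2 : ∫ u, u ^ 2 * Kker u = m2)
    (hiid : iIndepFun Ysamp P)
    (hlaw : ∀ k, Measure.map (Ysamp k) P
      = MeasureTheory.volume.withDensity (fun t => ENNReal.ofReal (q t)))
    (N : ℕ) (hN : 1 ≤ N) (y : Fin N → ℝ)
    (h : ℝ) (hh : 0 < h) (δ : ℝ) (hδ : δ ∈ Set.Ioo (0 : ℝ) 1) :
    1 - δ ≤
      (P {ω : Ω |
        |(-(1 / (N : ℝ)) * ∑ i, Real.log (max
              ((1 / (K * h)) * ∑ k, Kker ((y i - Ysamp k ω) / h)) ε))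
          - (-(1 / (N : ℝ)) * ∑ i, Real.log (max (q (y i)) ε))|
        ≤ (κ / (ε * h)) * Real.sqrt (2 * Real.log (2 * N / δ) / K)
            + (m2 * M / (2 * ε)) * h ^ 2}).toReal := by
  obtain ⟨hδ0, hδ1⟩ := hδ
  have hκ := pos_of_forall_mem_Icc_of_integral_eq_one hKkerBdd hK1
  have hN' : (1 : ℝ) ≤ N := Nat.one_le_cast.mpr hN
  set t := √(2 * log (2 * N / δ) / K)
  set m : Fin N → ℝ := fun i ↦ ∫ s, Kker ((y i - s) / h) * q s
  have hkernel_meas : ∀ i, Measurable fun s ↦ Kker ((y i - s) / h) :=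
    fun i ↦ hKkerMeas.comp (by fun_prop)
  let Bad : Fin N → Set Ω := fun i ↦
    {ω | κ * t * K ≤ |∑ k, (Kker ((y i - Ysamp k ω) / h) - m i)|}
  have hBad : ∀ i, P.real (Bad i) ≤ δ / N := fun i ↦ by
    refine (measureReal_le_abs_sum_sub_le_two_mul_exp_neg hK
      (hiid.comp _ fun _ ↦ hkernel_meas i)
      (fun k ↦ ((hkernel_meas i).comp (hYmeas k)).aemeasurable) hκ
      (fun _ _ ↦ hKkerBdd _) (fun k ↦ integral_comp_eq_integral_mul_of_map_eq_withDensity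
        (hYmeas k) hq.continuous.measurable hqnn (hlaw k) (hkernel_meas i))
      (log_nonneg <| (one_le_div hδ0).mpr (by linarith))).trans_eq ?_
    rw [exp_neg, exp_log (by positivity)]
    field_simp
  have hGood : (⋃ i, Bad i)ᶜ ⊆ {ω | |truncatedNLL ε (kde Kker h (Ysamp · ω)) y
      - truncatedNLL ε q y| ≤ (κ / (ε * h)) * t + (m2 * M / (2 * ε)) * h ^ 2} := by
    intro ω hω
    simp only [compl_iUnion, mem_iInter, mem_compl_iff, Bad, mem_ofPred_eq, not_le] at hω
    refine (abs_truncatedNLL_sub_le hN hε fun i ↦ abs_kde_sub_le hK hh hq hM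
      (fun u ↦ (hKkerBdd u).1) hK1int hK2int hK1 hK0 hK2 _ (hω i).le).trans_eq ?_
    field_simp
  calc 1 - δ = 1 - Fintype.card (Fin N) * (δ / N) := by rw [Fintype.card_fin]; field_simp
    _ ≤ P.real (⋃ i, Bad i)ᶜ := one_sub_card_mul_le_measureReal_compl_iUnion hBad
    _ ≤ _ := measureReal_mono hGood

/-- Finite-(K,h) truncated NLL error bound.
Let `q̂_h` be the KDE built from `K` i.i.d. samples of a C² model density `q`
(with `|q''| ≤ M`), evaluated at `N = C·L` points `y i`, with a kernel bounded by `κ`,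
mass 1, zero first moment and second moment `m₂`. For the empirical truncated NLL
`L̂ = -(1/N) ∑ᵢ log max{q̂_h(yᵢ), ε}` and population truncated NLL
`Lε = -(1/N) ∑ᵢ log max{q(yᵢ), ε}`, for any `δ ∈ (0,1)`, with probability at least
`1 - δ`, `|L̂ - Lε| ≤ (κ/(ε h)) √(2 log(2N/δ)/K) + (m₂ M/(2ε)) h²`. -/
theorem truncated_nll_error_bound
    {Ω : Type*} [MeasurableSpace Ω] (P : Measure Ω) [IsProbabilityMeasure P]
    (K : ℕ) (hK : 1 ≤ K) (Ysamp : Fin K → Ω → ℝ) (hYmeas : ∀ k, Measurable (Ysamp k))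
    (q Kker : ℝ → ℝ) (κ M m2 ε : ℝ) (hκ : 0 ≤ κ) (hε : 0 < ε)
    (hq : ContDiff ℝ 2 q) (hqnn : ∀ t, 0 ≤ q t) (hqmass : ∫ t, q t = 1)
    (hM : ∀ t, |deriv (deriv q) t| ≤ M)
    (hKkerMeas : Measurable Kker) (hKkerBdd : ∀ u, Kker u ∈ Set.Icc 0 κ)
    (hK1int : Integrable (fun u => u * Kker u))
    (hK2int : Integrable (fun u => u ^ 2 * Kker u))
    (hK1 : ∫ u, Kker u = 1)
    (hK0 : ∫ u, u * Kker u = 0)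
    (hK2 : ∫ u, u ^ 2 * Kker u = m2)
    (hiid : iIndepFun Ysamp P)
    (hlaw : ∀ k, Measure.map (Ysamp k) P
      = MeasureTheory.volume.withDensity (fun t => ENNReal.ofReal (q t)))
    (N : ℕ) (hN : 1 ≤ N) (y : Fin N → ℝ)
    (h : ℝ) (hh : 0 < h) (δ : ℝ) (hδ : δ ∈ Set.Ioo (0 : ℝ) 1) :
    1 - δ ≤
      (P {ω : Ω |
        |(-(1 / (N : ℝ)) * ∑ i, Real.log (max
              ((1 / (K * h)) * ∑ k, Kker ((y i - Ysamp k ω) / h)) ε))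
          - (-(1 / (N : ℝ)) * ∑ i, Real.log (max (q (y i)) ε))|
        ≤ (κ / (ε * h)) * Real.sqrt (2 * Real.log (2 * N / δ) / K)
            + (m2 * M / (2 * ε)) * h ^ 2}).toReal :=
  truncated_nll_error_bound_general P K hK Ysamp hYmeas q Kker κ M m2 ε hε hq hqnn hM hKkerMeas
    hKkerBdd hK1int hK2int hK1 hK0 hK2 hiid hlaw N hN y h hh δ hδ
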